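/- arXiv:1201.5019 — 4 statements merged into one kernel-verified Lean document; each statement's English description precedes it below -/
import Mathlib

section
/- Let A be a totally unimodular real m×n matrix, k ∈ {1,…,m}, and I ⊆ {1,…,m} with k ∉ I. If θ* = (x₊*, x₋*, y₊*, y₋*) is an extreme point of the standard-form LP polyhedron Q that minimizes the LP objective c over Q, then the vector x* := x₊* − x₋* lies in the feasible set F and minimizes the l0 objective ‖A(Ī,:)x‖₀ over all x ∈ F. -/
open Matrix

/-- The feasible set `F = {x : A(k,:)x = 1, A(i,:)x = 0 for i ∈ I}`. -/
def feasSet {m n : ℕ} (A : Matrix (Fin m) (Fin n) ℝ) (k : Fin m) (I : Finset (Fin m)) :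
    Set (Fin n → ℝ) :=
  {x | A k ⬝ᵥ x = 1 ∧ ∀ i ∈ I, A i ⬝ᵥ x = 0}

open Classical in
/-- The l0 objective `‖A(Ī,:)x‖₀`: number of indices `i ∉ I` with `A(i,:)x ≠ 0`. -/
noncomputable def l0Obj {m n : ℕ} (A : Matrix (Fin m) (Fin n) ℝ) (I : Finset (Fin m))
    (x : Fin n → ℝ) : ℕ :=
  (Iᶜ.filter (fun i => A i ⬝ᵥ x ≠ 0)).card

/-- Points `(x₊, x₋, y₊, y₋)` of the standard-form LP. -/
abbrev LPPoint (m n : ℕ) (I : Finset (Fin m)) : Type :=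
  (Fin n → ℝ) × (Fin n → ℝ) × ({i : Fin m // i ∉ I} → ℝ) × ({i : Fin m // i ∉ I} → ℝ)

/-- The standard-form LP polyhedron `Q`. -/
def lpQ {m n : ℕ} (A : Matrix (Fin m) (Fin n) ℝ) (k : Fin m) (I : Finset (Fin m)) :
    Set (LPPoint m n I) :=
  {θ | 0 ≤ θ.1 ∧ 0 ≤ θ.2.1 ∧ 0 ≤ θ.2.2.1 ∧ 0 ≤ θ.2.2.2 ∧
    (∀ j : {i : Fin m // i ∉ I}, A j.1 ⬝ᵥ (θ.1 - θ.2.1) = θ.2.2.1 j - θ.2.2.2 j) ∧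
    A k ⬝ᵥ (θ.1 - θ.2.1) = 1 ∧
    ∀ i ∈ I, A i ⬝ᵥ (θ.1 - θ.2.1) = 0}

/-- The LP objective `c(x₊,x₋,y₊,y₋) = Σ_{i∈Ī} (y₊(i) + y₋(i))`. -/
noncomputable def lpObj {m n : ℕ} (I : Finset (Fin m)) (θ : LPPoint m n I) : ℝ :=
  ∑ j : {i : Fin m // i ∉ I}, (θ.2.2.1 j + θ.2.2.2 j)

/-!
An extreme point of `Q` is an integral vector: `Q` is the standard-form polyhedron
`{v ≥ 0 | M v = b}` of a totally unimodular matrix `M = [A' -A' -U U]` and an integral `b`, and a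
vertex solves a square unimodular subsystem, so Cramer's rule makes it integral. Integrality gives
`y₊(i) + y₋(i) ≥ 1` wherever `A(i,:)x* ≠ 0`, hence `‖A(Ī,:)x*‖₀ ≤ c(θ*)`. Conversely, for `x ∈ F`,
total unimodularity yields `x'` with `A(k,:)x' = 1`, vanishing wherever `A x` does, and with all
values `A(i,:)x'` in `[-1, 1]`; splitting `x'` and `A x'` into positive and negative parts gives a
point of `Q` of cost at most `‖A(Ī,:)x‖₀`, and `c(θ*)` is below it by optimality.
-/

namespace Matrix

theorem dotProduct_eq_zero_of_mem_span {n R : Type*} [Fintype n] [CommSemiring R]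
    {s : Set (n → R)} {x : n → R} (h : ∀ w ∈ s, w ⬝ᵥ x = 0) {w : n → R}
    (hw : w ∈ Submodule.span R s) : w ⬝ᵥ x = 0 := by
  induction hw using Submodule.span_induction with
  | mem w hw => exact h w hw
  | zero => exact zero_dotProduct x
  | add w w' _ _ hw hw' => rw [add_dotProduct, hw, hw', add_zero]
  | smul c w _ hw => rw [smul_dotProduct, hw, smul_zero]

theorem exists_isUnit_det_submatrix_of_linearIndependent {ι κ K : Type*} [Field K] [Fintype ι]
    [DecidableEq ι] [Fintype κ] (M : Matrix ι κ K) (hM : LinearIndependent K M.row) :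
    ∃ p : ι → κ, IsUnit (M.submatrix id p).det := by
  have hspan : Submodule.span K (Set.range M.col) = ⊤ := by
    apply Submodule.eq_top_of_finrank_eq
    rw [← rank_eq_finrank_span_cols, rank_eq_finrank_span_row, finrank_span_eq_card hM,
      Module.finrank_fintype_fun_eq_card]
  obtain ⟨κ', a, -, hspan', hli⟩ := exists_linearIndependent' K M.col
  let e := (Pi.basisFun K ι).indexEquiv (Module.Basis.mk hli (by rw [hspan', hspan]))
  refine ⟨a ∘ e, ?_⟩
  rw [← isUnit_iff_isUnit_det, ← linearIndependent_cols_iff_isUnit]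
  exact hli.comp e e.injective

theorem det_mem_range_intCast {ι R : Type*} [CommRing R] [Fintype ι] [DecidableEq ι]
    (M : Matrix ι ι R) (hM : ∀ i j, M i j ∈ Set.range ((↑) : ℤ → R)) :
    M.det ∈ Set.range ((↑) : ℤ → R) := by
  choose N hN using hM
  exact ⟨(Matrix.of N).det, by rw [Int.cast_det]; congr; ext; simp [hN]⟩

theorem det_mul_dotProduct_eq_det_updateRow {ι R : Type*} [CommRing R] [Fintype ι]
    [DecidableEq ι] {B : Matrix ι ι R} {u : ι → R} {i : ι} (hu : B *ᵥ u = Pi.single i 1)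
    (r : ι → R) : B.det * (r ⬝ᵥ u) = (B.updateRow i r).det := by
  have hdet : B.det • u = B.adjugate *ᵥ Pi.single i 1 := by
    rw [← hu, mulVec_mulVec, adjugate_mul, smul_mulVec, one_mulVec]
  rw [← cramer_transpose_apply, cramer_eq_adjugate_mulVec, ← adjugate_transpose, mulVec_transpose,
    ← smul_eq_mul, ← dotProduct_smul, hdet, dotProduct_mulVec, dotProduct_single, mul_one]

end Matrix

theorem eq_zero_of_add_mem_of_sub_mem_of_mem_extremePoints {𝕜 E : Type*} [Field 𝕜]
    [LinearOrder 𝕜] [IsStrictOrderedRing 𝕜] [AddCommGroup E] [Module 𝕜 E] {S : Set E} {v d : E}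
    (hv : v ∈ S.extremePoints 𝕜) (hadd : v + d ∈ S) (hsub : v - d ∈ S) : d = 0 := by
  have hseg : v ∈ openSegment 𝕜 (v + d) (v - d) :=
    ⟨1 / 2, 1 / 2, by norm_num, by norm_num, by norm_num, by module⟩
  simpa using ((mem_extremePoints.mp hv).2 _ hadd _ hsub hseg).1

open Filter Topology in
theorem eq_zero_of_mulVec_eq_zero_of_mem_extremePoints {ρ γ : Type*} [Fintype γ]
    {M : Matrix ρ γ ℝ} {b : ρ → ℝ} {v d : γ → ℝ}
    (hv : v ∈ {w | 0 ≤ w ∧ M *ᵥ w = b}.extremePoints ℝ) (hd : M *ᵥ d = 0)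
    (hsupp : ∀ c, v c = 0 → d c = 0) : d = 0 := by
  obtain ⟨hv0, hvb⟩ := hv.1
  -- `d` vanishes where `v` does, so a small step along `± d` keeps every coordinate nonnegative
  have hsmall : ∀ᶠ ε in 𝓝 (0 : ℝ), ∀ c, 0 ≤ v c + ε * d c ∧ 0 ≤ v c - ε * d c := by
    refine eventually_all.2 fun c => ?_
    rcases (hv0 c).eq_or_lt with hc | hc
    · simp [← hc, hsupp c hc.symm]
    · refine (Tendsto.eventually_const_lt hc ?_).and (Tendsto.eventually_const_lt hc ?_) |>.mono
        fun _ h => ⟨h.1.le, h.2.le⟩ <;>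
      · apply Continuous.tendsto' (by fun_prop); simp
  obtain ⟨ε, hε, hεpos⟩ :=
    ((hsmall.filter_mono nhdsWithin_le_nhds).and self_mem_nhdsWithin).exists (f := 𝓝[>] (0 : ℝ))
  have := eq_zero_of_add_mem_of_sub_mem_of_mem_extremePoints hv (d := ε • d)
    ⟨fun c => (hε c).1, by simp [mulVec_add, mulVec_smul, hvb, hd]⟩
    ⟨fun c => (hε c).2, by simp [mulVec_sub, mulVec_smul, hvb, hd]⟩
  exact (smul_eq_zero.mp this).resolve_left hεpos.ne'

theorem linearIndepOn_col_of_mem_extremePoints {ρ γ : Type*} [Fintype γ]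
    {M : Matrix ρ γ ℝ} {b : ρ → ℝ} {v : γ → ℝ}
    (hv : v ∈ {w | 0 ≤ w ∧ M *ᵥ w = b}.extremePoints ℝ) :
    LinearIndepOn ℝ M.col {c | v c ≠ 0} := by
  rw [linearIndepOn_iff]
  intro l hl hl0
  have hMl : M *ᵥ ⇑l = 0 := by
    rw [← hl0, Finsupp.linearCombination_apply, Finsupp.sum_fintype _ _ (by simp)]
    ext r
    simp [mulVec, dotProduct, Finset.sum_apply, mul_comm]
  refine DFunLike.coe_injective
    (eq_zero_of_mulVec_eq_zero_of_mem_extremePoints hv hMl fun c hc => ?_)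
  by_contra h
  exact hl (Finsupp.mem_support_iff.mpr h) hc

namespace Matrix.IsTotallyUnimodular

variable {ι m n R : Type*}

theorem abs_det_le_one [CommRing R] [LinearOrder R] [IsStrictOrderedRing R] [Fintype ι]
    [DecidableEq ι] {B : Matrix ι ι R} (hB : B.IsTotallyUnimodular) : |B.det| ≤ 1 := by
  obtain ⟨s, hs⟩ := (isTotallyUnimodular_iff_fintype B).mp hB ι id id
  rw [submatrix_id_id] at hs
  rw [← hs]
  cases s <;> simp

theorem abs_det_eq_one [CommRing R] [LinearOrder R] [IsStrictOrderedRing R] [Fintype ι]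
    [DecidableEq ι] {B : Matrix ι ι R} (hB : B.IsTotallyUnimodular) (hdet : IsUnit B.det) :
    |B.det| = 1 := by
  obtain ⟨s, hs⟩ := (isTotallyUnimodular_iff_fintype B).mp hB ι id id
  rw [submatrix_id_id] at hs
  rw [← hs] at hdet ⊢
  cases s <;> simp at hdet ⊢

theorem apply_mem_range_intCast [CommRing R] {A : Matrix m n R} (hA : A.IsTotallyUnimodular)
    (i : m) (j : n) : A i j ∈ Set.range ((↑) : ℤ → R) := by
  obtain ⟨s, hs⟩ := hA.apply i j
  exact ⟨s, by rw [SignType.intCast_cast, hs]⟩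

theorem mul_diagonal_signType [CommRing R] [Fintype n] [DecidableEq n] {A : Matrix m n R}
    (hA : A.IsTotallyUnimodular) (ε : n → SignType) :
    (A * diagonal fun j => (ε j : R)).IsTotallyUnimodular := by
  rw [isTotallyUnimodular_iff]
  intro k f g
  have : (A * diagonal fun j => (ε j : R)).submatrix f g =
      A.submatrix f g * diagonal fun j => (ε (g j) : R) := by
    ext; simp
  rw [this, det_mul, det_diagonal]
  obtain ⟨s, hs⟩ := (isTotallyUnimodular_iff A).mp hA k f g
  exact ⟨s * ∏ j, ε (g j), by
    rw [SignType.coe_mul, hs]; congr 1; exact map_prod (SignType.castHom (α := R)) _ _⟩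

theorem fromCols_neg [CommRing R] [Fintype n] [DecidableEq n] {A : Matrix m n R}
    (hA : A.IsTotallyUnimodular) : (fromCols A (-A)).IsTotallyUnimodular := by
  have : fromCols A (-A) = (A.submatrix id (Sum.elim id id) : Matrix m (n ⊕ n) R) *
      (diagonal fun j => ((Sum.elim (fun _ => 1) (fun _ => -1) j : SignType) : R) :
        Matrix (n ⊕ n) (n ⊕ n) R) := by
    ext i j
    cases j <;> simp
  rw [this]
  exact (hA.submatrix id _).mul_diagonal_signType _

theorem fromCols_unitlike [CommRing R] [DecidableEq m] {m' : Type*} {A : Matrix m n R}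
    {B : Matrix m m' R} (hA : A.IsTotallyUnimodular)
    (hB : ∀ j, ∃ i : m, ∃ s : SignType, Bᵀ j = Pi.single i s.cast) :
    (fromCols A B).IsTotallyUnimodular := by
  rw [← transpose_isTotallyUnimodular_iff, transpose_fromCols]
  exact hA.transpose.fromRows_unitlike fun _ => hB

theorem mem_range_intCast_of_mulVec_eq [Fintype ι] [DecidableEq ι] {B : Matrix ι ι ℝ}
    (hB : B.IsTotallyUnimodular) (hdet : IsUnit B.det) {u b : ι → ℝ} (hu : B *ᵥ u = b)
    (hb : ∀ i, b i ∈ Set.range ((↑) : ℤ → ℝ)) (i : ι) : u i ∈ Set.range ((↑) : ℤ → ℝ) := by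
  have hcramer : B.det • u = B.cramer b := by
    rw [cramer_eq_adjugate_mulVec, ← hu, mulVec_mulVec, adjugate_mul, smul_mulVec, one_mulVec]
  have hu_i : u i = B.det * B.cramer b i := by
    rw [← hcramer, Pi.smul_apply, smul_eq_mul, ← mul_assoc, ← abs_mul_abs_self,
      hB.abs_det_eq_one hdet, one_mul, one_mul]
  obtain ⟨z, hz⟩ := det_mem_range_intCast B fun i j => hB.apply_mem_range_intCast i j
  obtain ⟨w, hw⟩ := det_mem_range_intCast (B.updateCol i b) fun r c => by
    rcases eq_or_ne c i with rfl | hc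
    · simpa using hb r
    · simpa [updateCol_ne hc] using hB.apply_mem_range_intCast r c
  exact ⟨z * w, by rw [hu_i, cramer_apply, ← hz, ← hw, Int.cast_mul]⟩

theorem mem_range_intCast_of_linearIndepOn {ρ γ : Type*} [Fintype ρ] [Fintype γ]
    {M : Matrix ρ γ ℝ} (hM : M.IsTotallyUnimodular) {b : ρ → ℝ}
    (hb : ∀ r, b r ∈ Set.range ((↑) : ℤ → ℝ)) {v : γ → ℝ} (hv : M *ᵥ v = b)
    (hind : LinearIndepOn ℝ M.col {c | v c ≠ 0}) (c : γ) : v c ∈ Set.range ((↑) : ℤ → ℝ) := by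
  classical
  by_cases hc : v c = 0
  · exact ⟨0, by simp [hc]⟩
  obtain ⟨p, hp⟩ := exists_isUnit_det_submatrix_of_linearIndependent
    (Matrix.of fun x : {x // v x ≠ 0} => M.col x) hind
  have hB : IsUnit (M.submatrix p Subtype.val).det := by
    rwa [← det_transpose]
  have hsys : M.submatrix p Subtype.val *ᵥ (fun x : {x // v x ≠ 0} => v x) = fun i => b (p i) := by
    ext i
    rw [← hv]
    simp only [mulVec, dotProduct, submatrix_apply]
    rw [← Fintype.sum_subtype_add_sum_subtype (fun x => v x ≠ 0),
      Fintype.sum_eq_zero (fun x : {x // ¬v x ≠ 0} => M (p i) x * v x) fun x => by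
        simp [not_not.mp x.2], add_zero]
  exact (hM.submatrix p Subtype.val).mem_range_intCast_of_mulVec_eq hB hsys (fun i => hb (p i))
    ⟨c, hc⟩

theorem mem_range_intCast_of_mem_extremePoints {ρ γ : Type*} [Fintype ρ] [Fintype γ]
    {M : Matrix ρ γ ℝ} (hM : M.IsTotallyUnimodular) {b : ρ → ℝ}
    (hb : ∀ r, b r ∈ Set.range ((↑) : ℤ → ℝ)) {v : γ → ℝ}
    (hv : v ∈ {w | 0 ≤ w ∧ M *ᵥ w = b}.extremePoints ℝ) (c : γ) :
    v c ∈ Set.range ((↑) : ℤ → ℝ) :=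
  hM.mem_range_intCast_of_linearIndepOn hb hv.1.2 (linearIndepOn_col_of_mem_extremePoints hv) c

/-- A maximal independent set of rows of `A` vanishing on `x`, together with row `k`, has a square
unimodular submatrix `B`; solving `B u = e_k` gives `x'`, and Cramer's rule writes each
`A j ⬝ᵥ x'` as a minor of `A` divided by `det B = ±1`. -/
theorem exists_abs_dotProduct_le_one [Fintype n] {A : Matrix m n ℝ} (hA : A.IsTotallyUnimodular)
    {k : m} {x : n → ℝ} (hx : A k ⬝ᵥ x = 1) :
    ∃ x' : n → ℝ, A k ⬝ᵥ x' = 1 ∧ (∀ j, A j ⬝ᵥ x = 0 → A j ⬝ᵥ x' = 0) ∧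
      ∀ j, |A j ⬝ᵥ x'| ≤ 1 := by
  classical
  obtain ⟨R, hRT, -, hTR, hRind⟩ := exists_linearIndepOn_extension (linearIndepOn_empty ℝ A)
    (Set.empty_subset {j | A j ⬝ᵥ x = 0})
  have hkR : k ∉ R := fun hk => by simpa [hx] using hRT hk
  have hind : LinearIndepOn ℝ A (insert k R) := by
    refine (linearIndepOn_insert hkR).2 ⟨hRind, fun hk => ?_⟩
    have := dotProduct_eq_zero_of_mem_span (by rintro _ ⟨j, hj, rfl⟩; exact hRT hj) hk
    simp [hx] at this
  let ι := ↥(insert k R)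
  have : Fintype ι := @Fintype.ofFinite _ hind.finite
  obtain ⟨p, hp⟩ :=
    exists_isUnit_det_submatrix_of_linearIndependent (A.submatrix Subtype.val id) hind
  set B := A.submatrix (Subtype.val : ι → m) p
  replace hp : IsUnit B.det := hp
  let k₀ : ι := ⟨k, Set.mem_insert k R⟩
  set u := B⁻¹ *ᵥ Pi.single k₀ 1
  have hu : B *ᵥ u = Pi.single k₀ 1 := by
    rw [mulVec_mulVec, mul_nonsing_inv _ hp, one_mulVec]
  set x' : n → ℝ := ∑ i, u i • Pi.single (p i) 1
  have hdot : ∀ w : n → ℝ, w ⬝ᵥ x' = (fun i => w (p i)) ⬝ᵥ u := by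
    intro w
    simp only [x', dotProduct_sum, dotProduct_smul, dotProduct_single, mul_one, smul_eq_mul]
    exact Finset.sum_congr rfl fun i _ => mul_comm _ _
  have hrow : ∀ i : ι, A i ⬝ᵥ x' = (Pi.single k₀ 1 : ι → ℝ) i := fun i => by
    rw [hdot, ← hu]; rfl
  refine ⟨x', by simpa using hrow k₀, fun j hj => ?_, fun j => ?_⟩
  · refine dotProduct_eq_zero_of_mem_span ?_ (hTR ⟨j, hj, rfl⟩)
    rintro _ ⟨r, hr, rfl⟩
    have hne : (⟨r, Set.mem_insert_of_mem k hr⟩ : ι) ≠ k₀ := by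
      simp only [k₀, ne_eq, Subtype.mk.injEq]
      rintro rfl
      exact hkR hr
    simpa [hne] using hrow ⟨r, Set.mem_insert_of_mem k hr⟩
  · have hminor : B.updateRow k₀ (fun i => A j (p i)) =
        A.submatrix (Function.update Subtype.val k₀ j) p := by
      ext i c
      by_cases hi : i = k₀ <;> simp [hi, B, updateRow_apply]
    have := det_mul_dotProduct_eq_det_updateRow hu fun i => A j (p i)
    rw [← hdot, hminor] at this
    calc |A j ⬝ᵥ x'| = |B.det * (A j ⬝ᵥ x')| := by
          rw [abs_mul, (hA.submatrix _ p).abs_det_eq_one hp, one_mul]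
      _ ≤ 1 := this ▸ (hA.submatrix _ p).abs_det_le_one

end Matrix.IsTotallyUnimodular

theorem one_le_add_of_ne {a b : ℝ} (ha : a ∈ Set.range ((↑) : ℤ → ℝ))
    (hb : b ∈ Set.range ((↑) : ℤ → ℝ)) (ha0 : 0 ≤ a) (hb0 : 0 ≤ b) (hab : a ≠ b) : 1 ≤ a + b := by
  obtain ⟨z, rfl⟩ := ha
  obtain ⟨w, rfl⟩ := hb
  have : z ≠ w := by exact_mod_cast hab
  have : (0 : ℤ) ≤ z := by exact_mod_cast ha0
  have : (0 : ℤ) ≤ w := by exact_mod_cast hb0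
  exact_mod_cast (by omega : (1 : ℤ) ≤ z + w)

namespace LPPoint

variable {m n : ℕ} {I : Finset (Fin m)}

def toVec : LPPoint m n I ≃ₗ[ℝ] ((Fin n ⊕ Fin n) ⊕ ({i // i ∉ I} ⊕ {i // i ∉ I}) → ℝ) where
  toFun θ := Sum.elim (Sum.elim θ.1 θ.2.1) (Sum.elim θ.2.2.1 θ.2.2.2)
  invFun v := (fun j => v (.inl (.inl j)), fun j => v (.inl (.inr j)),
    fun j => v (.inr (.inl j)), fun j => v (.inr (.inr j)))
  map_add' _ _ := by ext ((_ | _) | (_ | _)) <;> rfl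
  map_smul' _ _ := by ext ((_ | _) | (_ | _)) <;> rfl
  left_inv _ := rfl
  right_inv _ := by ext ((_ | _) | (_ | _)) <;> rfl

@[simp]
theorem toVec_apply (θ : LPPoint m n I) :
    toVec θ = Sum.elim (Sum.elim θ.1 θ.2.1) (Sum.elim θ.2.2.1 θ.2.2.2) :=
  rfl

end LPPoint

section StandardForm

variable {m n : ℕ} (A : Matrix (Fin m) (Fin n) ℝ) (k : Fin m) (I : Finset (Fin m))

/-- The constraint rows of `Q`: `inl j` is row `j ∈ Ī`, `inr none` is row `k` and `inr (some i)`
is row `i ∈ I`. -/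
def lpRows : Matrix ({i // i ∉ I} ⊕ Option {i // i ∈ I}) (Fin n) ℝ :=
  A.submatrix (Sum.elim Subtype.val fun o => o.elim k Subtype.val) id

def lpSlack : Matrix ({i // i ∉ I} ⊕ Option {i // i ∈ I}) {i // i ∉ I} ℝ :=
  fromRows 1 0

def lpMatrix :
    Matrix ({i // i ∉ I} ⊕ Option {i // i ∈ I})
      ((Fin n ⊕ Fin n) ⊕ ({i // i ∉ I} ⊕ {i // i ∉ I})) ℝ :=
  fromCols (fromCols (lpRows A k I) (-lpRows A k I)) (fromCols (-lpSlack I) (lpSlack I))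

def lpRhs : {i // i ∉ I} ⊕ Option {i // i ∈ I} → ℝ :=
  Sum.elim 0 fun o => o.elim 1 0

theorem lpMatrix_mulVec_toVec (θ : LPPoint m n I) :
    lpMatrix A k I *ᵥ LPPoint.toVec θ =
      lpRows A k I *ᵥ (θ.1 - θ.2.1) - lpSlack I *ᵥ (θ.2.2.1 - θ.2.2.2) := by
  simp only [lpMatrix, LPPoint.toVec_apply, fromCols_mulVec_sumElim, neg_mulVec, mulVec_sub]
  abel

theorem mem_lpQ_iff {θ : LPPoint m n I} :
    θ ∈ lpQ A k I ↔ 0 ≤ LPPoint.toVec θ ∧ lpMatrix A k I *ᵥ LPPoint.toVec θ = lpRhs I := by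
  rw [lpMatrix_mulVec_toVec]
  obtain ⟨xp, xm, yp, ym⟩ := θ
  simp [lpQ, lpRows, lpSlack, lpRhs, Pi.le_def, funext_iff, Sum.forall, Option.forall, mulVec,
    sub_eq_zero, and_assoc]

theorem image_toVec_lpQ :
    LPPoint.toVec '' lpQ A k I = {w | 0 ≤ w ∧ lpMatrix A k I *ᵥ w = lpRhs I} := by
  ext w
  rw [LinearEquiv.image_eq_preimage_symm, Set.mem_preimage, mem_lpQ_iff,
    LinearEquiv.apply_symm_apply]
  rfl

theorem lpMatrix_isTotallyUnimodular (hA : A.IsTotallyUnimodular) :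
    (lpMatrix A k I).IsTotallyUnimodular := by
  refine (hA.submatrix _ id).fromCols_neg.fromCols_unitlike fun j => ?_
  rcases j with j | j
  · exact ⟨.inl j, .neg, by
      ext (r | r) <;> simp [lpSlack, one_apply, Pi.single_apply, eq_comm, apply_ite]⟩
  · exact ⟨.inl j, .pos, by ext (r | r) <;> simp [lpSlack, one_apply, Pi.single_apply, eq_comm]⟩

theorem toVec_mem_range_intCast_of_mem_extremePoints (hA : A.IsTotallyUnimodular)
    {θ : LPPoint m n I} (hθ : θ ∈ (lpQ A k I).extremePoints ℝ) (c) :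
    LPPoint.toVec θ c ∈ Set.range ((↑) : ℤ → ℝ) := by
  have hv : LPPoint.toVec θ ∈ {w | 0 ≤ w ∧ lpMatrix A k I *ᵥ w = lpRhs I}.extremePoints ℝ := by
    rw [← image_toVec_lpQ, ← image_extremePoints]
    exact Set.mem_image_of_mem _ hθ
  refine (lpMatrix_isTotallyUnimodular A k I hA).mem_range_intCast_of_mem_extremePoints ?_ hv c
  rintro (_ | _ | _)
  exacts [⟨0, Int.cast_zero⟩, ⟨1, Int.cast_one⟩, ⟨0, Int.cast_zero⟩]

theorem l0Obj_eq_sum (x : Fin n → ℝ) :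
    (l0Obj A I x : ℝ) = ∑ j : {i // i ∉ I}, if A j ⬝ᵥ x = 0 then 0 else 1 := by
  rw [l0Obj, Finset.card_filter, Nat.cast_sum,
    Finset.sum_subtype (F := inferInstance) Iᶜ fun _ => Finset.mem_compl]
  simp [ite_not]

theorem l0Obj_le_lpObj {θ : LPPoint m n I} (hθ : θ ∈ lpQ A k I)
    (hint : ∀ c, LPPoint.toVec θ c ∈ Set.range ((↑) : ℤ → ℝ)) :
    (l0Obj A I (θ.1 - θ.2.1) : ℝ) ≤ lpObj I θ := by
  obtain ⟨-, -, hyp, hym, hy, -, -⟩ := hθ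
  rw [l0Obj_eq_sum, lpObj]
  refine Finset.sum_le_sum fun j _ => ?_
  split_ifs with h
  · exact add_nonneg (hyp j) (hym j)
  · exact one_le_add_of_ne (hint (.inr (.inl j))) (hint (.inr (.inr j))) (hyp j) (hym j)
      fun h' => h (by rw [hy, h', sub_self])

theorem exists_mem_lpQ_lpObj_le_l0Obj (hA : A.IsTotallyUnimodular) {x : Fin n → ℝ}
    (hx : x ∈ feasSet A k I) : ∃ θ ∈ lpQ A k I, lpObj I θ ≤ l0Obj A I x := by
  obtain ⟨x', hk, hzero, hle⟩ := hA.exists_abs_dotProduct_le_one hx.1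
  refine ⟨(x'⁺, x'⁻, fun j => (A j ⬝ᵥ x')⁺, fun j => (A j ⬝ᵥ x')⁻),
    ⟨posPart_nonneg _, negPart_nonneg _, fun _ => posPart_nonneg _, fun _ => negPart_nonneg _,
      ?_, ?_, ?_⟩, ?_⟩
  · simp [posPart_sub_negPart]
  · simpa [posPart_sub_negPart] using hk
  · simpa [posPart_sub_negPart] using fun i hi => hzero i (hx.2 i hi)
  · rw [lpObj, l0Obj_eq_sum]
    refine Finset.sum_le_sum fun j _ => ?_
    rw [posPart_add_negPart]
    split_ifs with h
    · simp [hzero j h]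
    · exact hle j

end StandardForm

theorem stmt0_general {m n : ℕ} (A : Matrix (Fin m) (Fin n) ℝ) (hA : A.IsTotallyUnimodular)
    (k : Fin m) (I : Finset (Fin m))
    (θ : LPPoint m n I)
    (hext : θ ∈ Set.extremePoints ℝ (lpQ A k I))
    (hopt : ∀ θ' ∈ lpQ A k I, lpObj I θ ≤ lpObj I θ') :
    θ.1 - θ.2.1 ∈ feasSet A k I ∧
      ∀ x ∈ feasSet A k I, l0Obj A I (θ.1 - θ.2.1) ≤ l0Obj A I x := by
  obtain ⟨-, -, -, -, -, hnorm, hI⟩ := hext.1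
  refine ⟨⟨hnorm, hI⟩, fun x hx => ?_⟩
  obtain ⟨θ', hθ', hcost⟩ := exists_mem_lpQ_lpObj_le_l0Obj A k I hA hx
  have hint := toVec_mem_range_intCast_of_mem_extremePoints A k I hA hext
  exact_mod_cast (l0Obj_le_lpObj A k I hext.1 hint).trans ((hopt θ' hθ').trans hcost)

/-- If `θ* = (x₊*, x₋*, y₊*, y₋*)` is an extreme point of `Q` minimizing the LP objective,
then `x* = x₊* − x₋*` is feasible for the l0 problem and minimizes the l0 objective over `F`. -/
theorem stmt0 {m n : ℕ} (A : Matrix (Fin m) (Fin n) ℝ) (hA : A.IsTotallyUnimodular)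
    (k : Fin m) (I : Finset (Fin m)) (hk : k ∉ I)
    (θ : LPPoint m n I)
    (hext : θ ∈ Set.extremePoints ℝ (lpQ A k I))
    (hopt : ∀ θ' ∈ lpQ A k I, lpObj I θ ≤ lpObj I θ') :
    θ.1 - θ.2.1 ∈ feasSet A k I ∧
      ∀ x ∈ feasSet A k I, l0Obj A I (θ.1 - θ.2.1) ≤ l0Obj A I x :=
  stmt0_general A hA k I θ hext hopt
end

section
/- Let A be a totally unimodular real m×n matrix, k ∈ {1,…,m}, and I ⊆ {1,…,m} with k ∉ I, and suppose the feasible set F is nonempty. Then there exists x* ∈ F such that: (i) x* minimizes the l0 objective ‖A(Ī,:)x‖₀ over F; (ii) x* minimizes the l1 objective ‖A(Ī,:)x‖₁ over F (in particular the l1 minimum over F is attained); (iii) every entry of A x* lies in {−1, 0, 1}; and (iv) the minimum value of the l1 objective over F equals the minimum value of the l0 objective over F. -/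
open Matrix

/-- The l1 objective `‖A(Ī,:)x‖₁ = Σ_{i∈Ī} |A(i,:)x|`. -/
noncomputable def l1Obj {m n : ℕ} (A : Matrix (Fin m) (Fin n) ℝ) (I : Finset (Fin m))
    (x : Fin n → ℝ) : ℝ :=
  ∑ i ∈ Iᶜ, |A i ⬝ᵥ x|

/-!
Call a feasible `x` support-minimal if every feasible `x'` with `supp (A x') ⊆ supp (A x)` has
`A x' = A x`. For such `x` and `y = A x`, the row `A j - y j • A k` vanishes on the common kernel of
the rows where `y` vanishes, so it lies in their span, which does not contain `A k`. Completing a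
basis of those rows by `A k` and choosing an invertible square submatrix, Cramer's rule writes
`y j` as a quotient of two minors of `A`, so `y j ∈ {-1, 0, 1}` and `‖y‖₁ = ‖y‖₀` on `Ī`.

Any feasible point reduces to a support-minimal one without enlarging its support or its l1
objective: if `x'` is feasible with no larger support and `A x' ≠ A x`, move from `x` along
`±(x' - x)`, in the direction in which the l1 objective (affine as long as no coordinate of `A x`
changes sign) does not increase, until the first coordinate vanishes. Reducing an l0-minimiser
gives `x*`, and reducing any feasible `x'` to `x''` gives
`l1 x* = l0 x* ≤ l0 x'' = l1 x'' ≤ l1 x'`.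
-/

namespace Matrix

theorem exists_isUnit_submatrix_of_linearIndependent_row {ι n K : Type*} [Field K]
    [Fintype ι] [DecidableEq ι] [Fintype n] {R : Matrix ι n K} (hR : LinearIndependent K R.row) :
    ∃ g : ι → n, IsUnit (R.submatrix id g) := by
  obtain ⟨κ, a, -, hspan, hli⟩ := exists_linearIndependent' K R.col
  have := hli.finite
  have := Fintype.ofFinite κ
  have hcard : Fintype.card κ = Fintype.card ι := by
    rw [← finrank_span_eq_card hli, hspan, ← rank_eq_finrank_span_cols, hR.rank_matrix]
  obtain e := Fintype.equivOfCardEq hcard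
  refine ⟨a ∘ e.symm, ?_⟩
  rw [← linearIndependent_cols_iff_isUnit]
  exact hli.comp e.symm e.symm.injective

theorem IsTotallyUnimodular.mem_range_signType_cast_of_vecMul_submatrix
    {m n ι K : Type*} [Field K] [Fintype ι] [DecidableEq ι] {A : Matrix m n K}
    (hA : A.IsTotallyUnimodular) {f : ι → m} {g : ι → n} (hdet : (A.submatrix f g).det ≠ 0)
    {c : ι → K} {j : m} (hc : c ᵥ* A.submatrix f g = fun t => A j (g t)) (i : ι) :
    c i ∈ Set.range SignType.cast := by
  set M := A.submatrix f g
  have hcramer : M.det * c i = (A.submatrix (Function.update f i j) g).det := by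
    have : Mᵀ.cramer (Mᵀ *ᵥ c) = M.det • c := by
      rw [cramer_eq_adjugate_mulVec, mulVec_mulVec, adjugate_mul, det_transpose, smul_mulVec,
        one_mulVec]
    rw [← smul_eq_mul, ← Pi.smul_apply, ← this, cramer_transpose_apply, mulVec_transpose, hc]
    congr 1
    ext r t
    rcases eq_or_ne r i with rfl | hr
    · simp [M]
    · simp [M, hr]
  obtain ⟨s, hs⟩ := (isTotallyUnimodular_iff_fintype A).1 hA ι f g
  obtain ⟨s', hs'⟩ := (isTotallyUnimodular_iff_fintype A).1 hA ι (Function.update f i j) g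
  refine ⟨s * s', ?_⟩
  have hs0 : s ≠ 0 := by rintro rfl; exact hdet (by simp [M, ← hs])
  have hss : (s : K) * s = 1 := by rcases s with _ | _ | _ <;> simp at hs0 ⊢
  rw [SignType.coe_mul, hs, hs', ← hcramer, ← mul_assoc, ← hs, hss, one_mul]

theorem IsTotallyUnimodular.mem_range_signType_cast_of_sub_smul_mem_span
    {m n K : Type*} [Field K] [Fintype n] {A : Matrix m n K} (hA : A.IsTotallyUnimodular)
    {S : Set m} {j k : m} {a : K} (hk : A k ∉ Submodule.span K (A.row '' S))
    (hj : A j - a • A k ∈ Submodule.span K (A.row '' S)) : a ∈ Set.range SignType.cast := by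
  classical
  obtain ⟨κ, b, -, hspan, hli⟩ := exists_linearIndependent' K (fun i : S => A.row i)
  have := hli.finite
  have := Fintype.ofFinite κ
  rw [Set.image_eq_range, ← hspan] at hk hj
  let f : Option κ → m := fun o => o.casesOn' k (fun t => b t)
  have hrows : LinearIndependent K (A.submatrix f id).row := by
    have : (A.submatrix f id).row = fun o => o.casesOn' (A k) ((fun i : S => A.row i) ∘ b) := by
      ext o : 1
      cases o <;> rfl
    exact this ▸ hli.option hk
  obtain ⟨g, hg⟩ := exists_isUnit_submatrix_of_linearIndependent_row hrows
  rw [submatrix_submatrix, Function.comp_id, Function.id_comp] at hg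
  obtain ⟨c, hc⟩ := (Submodule.mem_span_range_iff_exists_fun K).1 hj
  refine hA.mem_range_signType_cast_of_vecMul_submatrix
    ((isUnit_iff_isUnit_det _).1 hg).ne_zero (c := fun o => o.casesOn' a c) (j := j) ?_ none
  ext t
  have := congrFun hc (g t)
  simp only [Finset.sum_apply, Pi.smul_apply, Pi.sub_apply, smul_eq_mul, Function.comp_apply,
    row_apply] at this
  simp only [vecMul, dotProduct, Fintype.sum_option, submatrix_apply, f, Option.casesOn'_none,
    Option.casesOn'_some]
  linear_combination this

theorem mem_span_image_row_iff {m n K : Type*} [Field K] [Fintype n] [DecidableEq n]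
    {A : Matrix m n K} {S : Set m} {v : n → K} :
    v ∈ Submodule.span K (A.row '' S) ↔ ∀ x, (∀ i ∈ S, A i ⬝ᵥ x = 0) → v ⬝ᵥ x = 0 := by
  refine ⟨fun hv x hx => ?_, fun h => ?_⟩
  · induction hv using Submodule.span_induction with
    | mem v hv => obtain ⟨i, hi, rfl⟩ := hv; exact hx i hi
    | zero => exact zero_dotProduct x
    | add u v _ _ hu hv => rw [add_dotProduct, hu, hv, add_zero]
    | smul a v _ hv => rw [smul_dotProduct, hv, smul_zero]
  · let e := dotProductEquiv K n
    have hv : e v ∈ Submodule.span K (Set.range fun i : S => e (A i)) :=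
      FiniteDimensional.mem_span_of_iInf_ker_le_ker fun x hx => h x fun i hi => by
        simpa [e] using (Submodule.mem_iInf _).1 hx ⟨i, hi⟩
    rw [Set.image_eq_range, ← Submodule.apply_mem_span_image_iff_mem_span (f := e.toLinearMap)
      e.injective, ← Set.range_comp]
    exact hv

end Matrix

theorem abs_add_eq_abs_add_sign_mul {a b : ℝ} (h : 0 ≤ a * (a + b)) (ha : a = 0 → b = 0) :
    |a + b| = |a| + Real.sign a * b := by
  rcases lt_trichotomy a 0 with ha' | rfl | ha'
  · rw [Real.sign_of_neg ha', abs_of_neg ha', abs_of_nonpos (nonpos_of_mul_nonneg_right h ha')]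
    ring
  · simp [ha rfl]
  · rw [Real.sign_of_pos ha', abs_of_pos ha', abs_of_nonneg (nonneg_of_mul_nonneg_right h ha')]
    ring

theorem exists_pos_sign_preserving_step {ι : Type*} [Fintype ι] {y w : ι → ℝ}
    (h : ∃ i, y i * w i < 0) :
    ∃ t > 0, (∀ i, 0 ≤ y i * (y i + t * w i)) ∧ ∃ j, y j ≠ 0 ∧ y j + t * w j = 0 := by
  classical
  obtain ⟨j, hj, hmin⟩ := (Finset.univ.filter fun i => y i * w i < 0).exists_min_image
    (fun i => -y i / w i) (by simpa [Finset.Nonempty] using h)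
  simp only [Finset.mem_filter, Finset.mem_univ, true_and] at hj hmin
  have hwj : w j ≠ 0 := by rintro h0; simp [h0] at hj
  have hyj : y j ≠ 0 := by rintro h0; simp [h0] at hj
  have ht : 0 < -y j / w j := by
    rw [show -y j / w j = -(y j * w j) / w j ^ 2 by field_simp]
    exact div_pos (neg_pos.2 hj) (by positivity)
  refine ⟨-y j / w j, ht, fun i => ?_, j, hyj, by field_simp; ring⟩
  by_cases hi : y i * w i < 0
  · have hwi : w i ≠ 0 := by rintro h0; simp [h0] at hi
    have hratio : -y i / w i * (y i * w i) = -y i ^ 2 := by field_simp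
    nlinarith [mul_le_mul_of_nonpos_right (hmin i hi) hi.le]
  · nlinarith [sq_nonneg (y i), mul_nonneg ht.le (not_lt.1 hi)]

open Function in
theorem exists_support_ssubset_sum_abs_le {ι : Type*} [Fintype ι] (s : Finset ι) {y w : ι → ℝ}
    (hwy : support w ⊆ support y) (hw : ∃ i ∈ s, w i ≠ 0) :
    ∃ t : ℝ, support (y + t • w) ⊂ support y ∧
      ∑ i ∈ s, |(y + t • w) i| ≤ ∑ i ∈ s, |y i| := by
  wlog hσ : ∑ i ∈ s, Real.sign (y i) * w i ≤ 0 generalizing w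
  · obtain ⟨t, ht⟩ := this (w := -w) (by simpa using hwy) (by simpa using hw)
      (by simp only [Pi.neg_apply, mul_neg, Finset.sum_neg_distrib]; linarith)
    exact ⟨-t, by simpa using ht⟩
  have hwy' : ∀ i, y i = 0 → w i = 0 := fun i => by
    simpa using mt (@hwy i)
  have hopposite : ∃ i, y i * w i < 0 := by
    by_contra! hnn
    obtain ⟨i, hi, hwi⟩ := hw
    have habs : ∀ i, Real.sign (y i) * w i = |w i| := fun i => by
      rcases lt_trichotomy (y i) 0 with hy | hy | hy
      · rw [Real.sign_of_neg hy, abs_of_nonpos (nonpos_of_mul_nonneg_right (hnn i) hy)]; ring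
      · simp [hwy' i hy]
      · rw [Real.sign_of_pos hy, abs_of_nonneg (nonneg_of_mul_nonneg_right (hnn i) hy)]; ring
    simp only [habs] at hσ
    exact hwi (abs_eq_zero.1 ((Finset.sum_eq_zero_iff_of_nonneg fun i _ => abs_nonneg (w i)).1
      (le_antisymm hσ (Finset.sum_nonneg fun i _ => abs_nonneg (w i))) i hi))
  obtain ⟨t, ht, hsign, j, hyj, hj⟩ := exists_pos_sign_preserving_step hopposite
  refine ⟨t, ?_, ?_⟩
  · refine (Set.ssubset_iff_of_subset fun i hi => ?_).2 ⟨j, hyj, by simp [hj]⟩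
    by_contra hyi
    simp [not_not.1 hyi, hwy' i (not_not.1 hyi)] at hi
  · calc ∑ i ∈ s, |(y + t • w) i| = ∑ i ∈ s, |y i| + t * ∑ i ∈ s, Real.sign (y i) * w i := by
          simp only [Pi.add_apply, Pi.smul_apply, smul_eq_mul, Finset.mul_sum,
            ← Finset.sum_add_distrib]
          refine Finset.sum_congr rfl fun i _ => ?_
          rw [abs_add_eq_abs_add_sign_mul (hsign i) fun h0 => by simp [hwy' i h0]]
          ring
      _ ≤ ∑ i ∈ s, |y i| := by nlinarith

section Feasible

variable {m n : ℕ} {A : Matrix (Fin m) (Fin n) ℝ} {k : Fin m} {I : Finset (Fin m)}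

theorem mem_feasSet_iff {x : Fin n → ℝ} :
    x ∈ feasSet A k I ↔ (A *ᵥ x) k = 1 ∧ ∀ i ∈ I, (A *ᵥ x) i = 0 :=
  Iff.rfl

theorem add_mem_feasSet {x z : Fin n → ℝ} (hx : x ∈ feasSet A k I) (hzk : (A *ᵥ z) k = 0)
    (hzI : ∀ i ∈ I, (A *ᵥ z) i = 0) : x + z ∈ feasSet A k I := by
  rw [mem_feasSet_iff] at hx ⊢
  simp_all [mulVec_add]

theorem l1Obj_eq_sum_abs_mulVec (x : Fin n → ℝ) : l1Obj A I x = ∑ i ∈ Iᶜ, |(A *ᵥ x) i| :=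
  rfl

theorem l0Obj_le_of_support_subset {x x' : Fin n → ℝ}
    (h : Function.support (A *ᵥ x) ⊆ Function.support (A *ᵥ x')) : l0Obj A I x ≤ l0Obj A I x' :=
  Finset.card_le_card (Finset.monotone_filter_right _ fun _ _ hi => h hi)

theorem l1Obj_eq_l0Obj {x : Fin n → ℝ} (h : ∀ i, (A *ᵥ x) i ∈ ({-1, 0, 1} : Set ℝ)) :
    l1Obj A I x = l0Obj A I x := by
  classical
  rw [l0Obj, Finset.natCast_card_filter, l1Obj_eq_sum_abs_mulVec]
  refine Finset.sum_congr rfl fun i _ => ?_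
  change |(A *ᵥ x) i| = if (A *ᵥ x) i ≠ 0 then 1 else 0
  rcases h i with h | h | h <;> simp_all

def IsSupportMinimal (A : Matrix (Fin m) (Fin n) ℝ) (k : Fin m) (I : Finset (Fin m))
    (x : Fin n → ℝ) : Prop :=
  x ∈ feasSet A k I ∧ ∀ x' ∈ feasSet A k I,
    Function.support (A *ᵥ x') ⊆ Function.support (A *ᵥ x) → A *ᵥ x' = A *ᵥ x

theorem exists_isSupportMinimal_le {x : Fin n → ℝ} (hx : x ∈ feasSet A k I) :
    ∃ x', IsSupportMinimal A k I x' ∧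
      Function.support (A *ᵥ x') ⊆ Function.support (A *ᵥ x) ∧ l1Obj A I x' ≤ l1Obj A I x := by
  induction hs : Function.support (A *ᵥ x) using WellFoundedLT.induction generalizing x with
  | _ s ih =>
  subst hs
  by_cases hmin : IsSupportMinimal A k I x
  · exact ⟨x, hmin, subset_rfl, le_rfl⟩
  obtain ⟨x', hx', hsub, hne⟩ : ∃ x' ∈ feasSet A k I,
      Function.support (A *ᵥ x') ⊆ Function.support (A *ᵥ x) ∧ A *ᵥ x' ≠ A *ᵥ x := by
    simpa [IsSupportMinimal, hx] using hmin
  obtain ⟨hxk, hxI⟩ := mem_feasSet_iff.1 hx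
  obtain ⟨hx'k, hx'I⟩ := mem_feasSet_iff.1 hx'
  set w := A *ᵥ (x' - x) with hw
  have hwI : ∀ i ∈ I, w i = 0 := fun i hi => by simp [hw, mulVec_sub, hxI i hi, hx'I i hi]
  have hwy : Function.support w ⊆ Function.support (A *ᵥ x) := fun i hi hxi => by
    simp [hw, mulVec_sub, hxi, Function.notMem_support.1 (mt (@hsub i) (not_not.2 hxi))] at hi
  have hw0 : ∃ i ∈ Iᶜ, w i ≠ 0 := by
    obtain ⟨i, hi⟩ := Function.ne_iff.1 (sub_ne_zero.2 hne)
    exact ⟨i, Finset.mem_compl.2 fun hI => hi (by simpa [hw, mulVec_sub] using hwI i hI), by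
      simpa [hw, mulVec_sub] using hi⟩
  obtain ⟨t, hssub, hl1⟩ := exists_support_ssubset_sum_abs_le Iᶜ hwy hw0
  have hAx : A *ᵥ (x + t • (x' - x)) = A *ᵥ x + t • w := by simp [hw, mulVec_add, mulVec_smul]
  have hfeas : x + t • (x' - x) ∈ feasSet A k I :=
    add_mem_feasSet hx (by simp [mulVec_smul, mulVec_sub, hxk, hx'k]) fun i hi => by
      simp [mulVec_smul, hwI i hi, ← hw]
  obtain ⟨x'', hmin'', hsub'', hl1''⟩ := ih _ (hAx ▸ hssub) hfeas rfl
  refine ⟨x'', hmin'', hsub''.trans (hAx ▸ hssub.subset), hl1''.trans ?_⟩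
  rwa [l1Obj_eq_sum_abs_mulVec, l1Obj_eq_sum_abs_mulVec, hAx]

theorem IsSupportMinimal.mulVec_mem (hA : A.IsTotallyUnimodular) {x : Fin n → ℝ}
    (hx : IsSupportMinimal A k I x) (j : Fin m) : (A *ᵥ x) j ∈ ({-1, 0, 1} : Set ℝ) := by
  obtain ⟨hxF, hmin⟩ := hx
  obtain ⟨hxk, hxI⟩ := mem_feasSet_iff.1 hxF
  set S := {i | (A *ᵥ x) i = 0}
  have hk : A k ∉ Submodule.span ℝ (A.row '' S) := fun h =>
    one_ne_zero (hxk.symm.trans (mem_span_image_row_iff.1 h x fun _ hi => hi))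
  have hj : A j - (A *ᵥ x) j • A k ∈ Submodule.span ℝ (A.row '' S) := by
    refine mem_span_image_row_iff.2 fun x' hx' => ?_
    have hx'S : ∀ i ∈ S, (A *ᵥ x') i = 0 := hx'
    set c := (A *ᵥ x') k
    have hfeas : x + (x' - c • x) ∈ feasSet A k I :=
      add_mem_feasSet hxF (by simp [mulVec_sub, mulVec_smul, hxk, c]) fun i hi => by
        simp [mulVec_sub, mulVec_smul, hxI i hi, hx'S i (hxI i hi)]
    have hsupp : Function.support (A *ᵥ (x + (x' - c • x))) ⊆ Function.support (A *ᵥ x) :=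
      fun i hi hxi => hi (by simp [mulVec_add, mulVec_sub, mulVec_smul, hxi, hx'S i hxi])
    have := congrFun (hmin _ hfeas hsupp) j
    simp only [mulVec_add, mulVec_sub, mulVec_smul, Pi.add_apply, Pi.sub_apply, Pi.smul_apply,
      smul_eq_mul] at this
    simp only [sub_dotProduct, smul_dotProduct, smul_eq_mul]
    change (A *ᵥ x') j - (A *ᵥ x) j * c = 0
    linarith
  obtain ⟨s, hs⟩ := hA.mem_range_signType_cast_of_sub_smul_mem_span hk hj
  rw [← hs]
  rcases s with _ | _ | _ <;> simp

end Feasible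

theorem stmt3_general {m n : ℕ} (A : Matrix (Fin m) (Fin n) ℝ) (hA : A.IsTotallyUnimodular)
    (k : Fin m) (I : Finset (Fin m))
    (hne : (feasSet A k I).Nonempty) :
    ∃ x ∈ feasSet A k I,
      (∀ x' ∈ feasSet A k I, l0Obj A I x ≤ l0Obj A I x') ∧
      (∀ x' ∈ feasSet A k I, l1Obj A I x ≤ l1Obj A I x') ∧
      (∀ i : Fin m, A.mulVec x i ∈ ({-1, 0, 1} : Set ℝ)) ∧
      l1Obj A I x = (l0Obj A I x : ℝ) := by
  obtain ⟨x, hx, hsupp, -⟩ :=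
    exists_isSupportMinimal_le (Function.argminOn_mem (l0Obj A I) _ hne)
  have hl0 : ∀ x' ∈ feasSet A k I, l0Obj A I x ≤ l0Obj A I x' := fun x' hx' =>
    (l0Obj_le_of_support_subset hsupp).trans (Function.argminOn_le _ _ hx')
  refine ⟨x, hx.1, hl0, fun x' hx' => ?_, hx.mulVec_mem hA, l1Obj_eq_l0Obj (hx.mulVec_mem hA)⟩
  obtain ⟨x'', hx'', -, hl1⟩ := exists_isSupportMinimal_le hx'
  calc l1Obj A I x = l0Obj A I x := l1Obj_eq_l0Obj (hx.mulVec_mem hA)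
    _ ≤ l0Obj A I x'' := by exact_mod_cast hl0 x'' hx''.1
    _ = l1Obj A I x'' := (l1Obj_eq_l0Obj (hx''.mulVec_mem hA)).symm
    _ ≤ l1Obj A I x' := hl1

/-- If `A` is totally unimodular and the feasible set is nonempty, then some `x* ∈ F`
simultaneously minimizes the l0 objective and the l1 objective over `F`, has all entries of
`A x*` in `{−1,0,1}`, and the l1 minimum equals the l0 minimum. -/
theorem stmt3 {m n : ℕ} (A : Matrix (Fin m) (Fin n) ℝ) (hA : A.IsTotallyUnimodular)
    (k : Fin m) (I : Finset (Fin m)) (hk : k ∉ I)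
    (hne : (feasSet A k I).Nonempty) :
    ∃ x ∈ feasSet A k I,
      (∀ x' ∈ feasSet A k I, l0Obj A I x ≤ l0Obj A I x') ∧
      (∀ x' ∈ feasSet A k I, l1Obj A I x ≤ l1Obj A I x') ∧
      (∀ i : Fin m, A.mulVec x i ∈ ({-1, 0, 1} : Set ℝ)) ∧
      l1Obj A I x = (l0Obj A I x : ℝ) :=
  stmt3_general A hA k I hne
end

section
/- Let H be a real m×n matrix and k ∈ {1,…,m}, and assume H(k,:) ≠ 0 and rank(H) = n. Then the minimum of ‖Hθ‖₀ over all θ ∈ ℝⁿ with H(k,:)θ = 1 is attained, the minimum of |J| over all sets J ⊆ {1,…,m} with k ∈ J, rank(H(J̄,:)) < n and rank(H(J̄ ∪ {k},:)) = n is attained, and these two minimum values are equal. -/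
open Matrix

/-- The submatrix of `H` consisting of the rows indexed by the finite set `S`. -/
def rowSub {m n : ℕ} (H : Matrix (Fin m) (Fin n) ℝ) (S : Finset (Fin m)) :
    Matrix {i : Fin m // i ∈ S} (Fin n) ℝ :=
  Matrix.of fun i j => H i.1 j

open Classical in
/-- `‖Hθ‖₀`: the number of nonzero entries of `Hθ`. -/
noncomputable def l0Full {m n : ℕ} (H : Matrix (Fin m) (Fin n) ℝ) (θ : Fin n → ℝ) : ℕ :=
  (Finset.univ.filter fun i => H.mulVec θ i ≠ 0).card

/-- Feasibility for the observability problem: `k ∈ J`, `rank(H(J̄,:)) < n`, and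
`rank(H(J̄ ∪ {k},:)) = n`. -/
def obsFeas {m n : ℕ} (H : Matrix (Fin m) (Fin n) ℝ) (k : Fin m) (J : Finset (Fin m)) : Prop :=
  k ∈ J ∧ (rowSub H Jᶜ).rank < n ∧ (rowSub H (insert k Jᶜ)).rank = n

/-!
Let `θ` minimize `‖Hθ‖₀` subject to `H(k,:)θ = 1` and let `J` be the support of `Hθ`. Then `θ` is
a nonzero kernel vector of `H(J̄,:)`. If `H(J̄ ∪ {k},:)` had a nonzero kernel vector `v`, then,
as `H` has full column rank, `H(i,:)v ≠ 0` for some `i ∈ J`, and subtracting a multiple of `v`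
from `θ` would kill the `i`-th entry of `Hθ` without leaving `J` or changing `H(k,:)θ`,
contradicting minimality. Conversely, a feasible `J'` gives a kernel vector of `H(J̄',:)` not
annihilated by `H(k,:)`; normalized, it is a competitor with `‖Hθ'‖₀ ≤ |J'|`.
-/

theorem Matrix.rank_lt_card_iff_exists_mulVec_eq_zero {ι κ K : Type*} [Fintype κ] [Field K]
    (A : Matrix ι κ K) : A.rank < Fintype.card κ ↔ ∃ v ≠ 0, A *ᵥ v = 0 := by
  rw [Matrix.rank, ← Module.finrank_fintype_fun_eq_card K,
    ← LinearMap.finrank_range_add_finrank_ker A.mulVecLin, lt_add_iff_pos_right,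
    Module.finrank_pos_iff_exists_ne_zero]
  simp [and_comm]

theorem exists_dotProduct_eq_one {ι K : Type*} [Fintype ι] [Field K] {v : ι → K} (hv : v ≠ 0) :
    ∃ θ, v ⬝ᵥ θ = 1 := by
  classical
  obtain ⟨j, hj⟩ := Function.ne_iff.mp hv
  exact ⟨Pi.single j (v j)⁻¹, by rw [dotProduct_single, mul_inv_cancel₀ hj]⟩

theorem Matrix.eq_zero_of_mulVec_eq_zero_of_rank_eq_card {ι κ K : Type*} [Fintype κ] [Field K]
    {A : Matrix ι κ K} (hA : A.rank = Fintype.card κ) {v : κ → K} (hv : A *ᵥ v = 0) :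
    v = 0 := by
  by_contra hv0
  exact (rank_lt_card_iff_exists_mulVec_eq_zero A).mpr ⟨v, hv0, hv⟩ |>.ne hA

section SparseRecovery

variable {m n : ℕ} {H : Matrix (Fin m) (Fin n) ℝ}

theorem rowSub_mulVec_eq_zero_iff {S : Finset (Fin m)} {v : Fin n → ℝ} :
    rowSub H S *ᵥ v = 0 ↔ ∀ i ∈ S, H i ⬝ᵥ v = 0 := by
  rw [funext_iff, Subtype.forall]
  rfl

theorem rank_rowSub_lt_iff {S : Finset (Fin m)} :
    (rowSub H S).rank < n ↔ ∃ v ≠ 0, ∀ i ∈ S, H i ⬝ᵥ v = 0 := by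
  simpa only [Fintype.card_fin, rowSub_mulVec_eq_zero_iff] using
    rank_lt_card_iff_exists_mulVec_eq_zero (rowSub H S)


variable (H) in
open Classical in
noncomputable def l0Support (θ : Fin n → ℝ) : Finset (Fin m) :=
  Finset.univ.filter fun i => H.mulVec θ i ≠ 0

theorem mem_l0Support {θ : Fin n → ℝ} {i : Fin m} : i ∈ l0Support H θ ↔ H i ⬝ᵥ θ ≠ 0 := by
  simp only [l0Support, Finset.mem_filter, Finset.mem_univ, true_and]
  rfl

theorem card_l0Support (θ : Fin n → ℝ) : (l0Support H θ).card = l0Full H θ := rfl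

theorem l0Full_le_card {θ : Fin n → ℝ} {S : Finset (Fin m)} (h : ∀ i ∉ S, H i ⬝ᵥ θ = 0) :
    l0Full H θ ≤ S.card := by
  rw [← card_l0Support]
  refine Finset.card_le_card fun i hi => ?_
  by_contra hiS
  exact mem_l0Support.mp hi (h i hiS)

theorem l0Full_sub_smul_lt {θ v : Fin n → ℝ} {i : Fin m} (hθi : H i ⬝ᵥ θ ≠ 0)
    (hvi : H i ⬝ᵥ v ≠ 0) (hv : ∀ r, H r ⬝ᵥ θ = 0 → H r ⬝ᵥ v = 0) :
    l0Full H (θ - (H i ⬝ᵥ θ / H i ⬝ᵥ v) • v) < l0Full H θ := by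
  have hsupp : ∀ r ∉ (l0Support H θ).erase i,
      H r ⬝ᵥ (θ - (H i ⬝ᵥ θ / H i ⬝ᵥ v) • v) = 0 := by
    intro r hr
    rw [dotProduct_sub, dotProduct_smul, smul_eq_mul]
    rw [Finset.mem_erase, not_and_or, not_not, mem_l0Support, not_not] at hr
    rcases hr with rfl | hr
    · field_simp
      ring
    · rw [hr, hv r hr, mul_zero, sub_zero]
  calc _ ≤ ((l0Support H θ).erase i).card := l0Full_le_card hsupp
    _ < (l0Support H θ).card := Finset.card_erase_lt_of_mem (mem_l0Support.mpr hθi)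

variable {k : Fin m} {θ : Fin n → ℝ}

theorem rank_rowSub_insert_compl_l0Support (hrank : H.rank = n)
    (hmin : MinimalFor (fun θ => H k ⬝ᵥ θ = 1) (l0Full H) θ) :
    (rowSub H (insert k (l0Support H θ)ᶜ)).rank = n := by
  refine le_antisymm ((rank_le_card_width _).trans_eq (Fintype.card_fin n))
    (not_lt.mp fun hlt => ?_)
  obtain ⟨v, hv0, hv⟩ := rank_rowSub_lt_iff.mp hlt
  have hkv : H k ⬝ᵥ v = 0 := hv k (Finset.mem_insert_self _ _)
  have hv_of_θ : ∀ r, H r ⬝ᵥ θ = 0 → H r ⬝ᵥ v = 0 := fun r hr =>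
    hv r (Finset.mem_insert_of_mem (Finset.mem_compl.mpr (mt mem_l0Support.mp (not_not.mpr hr))))
  obtain ⟨i, hvi⟩ : ∃ i, H i ⬝ᵥ v ≠ 0 :=
    Function.ne_iff.mp fun hHv => hv0 <|
      eq_zero_of_mulVec_eq_zero_of_rank_eq_card (hrank.trans (Fintype.card_fin n).symm) hHv
  have hθi : H i ⬝ᵥ θ ≠ 0 := mt (hv_of_θ i) hvi
  refine hmin.not_lt ?_ (l0Full_sub_smul_lt hθi hvi hv_of_θ)
  rw [dotProduct_sub, dotProduct_smul, hkv, hmin.prop, smul_zero, sub_zero]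

theorem obsFeas_l0Support (hrank : H.rank = n)
    (hmin : MinimalFor (fun θ => H k ⬝ᵥ θ = 1) (l0Full H) θ) :
    obsFeas H k (l0Support H θ) := by
  have hθ0 : θ ≠ 0 := by
    rintro rfl
    simpa using hmin.prop
  refine ⟨mem_l0Support.mpr (hmin.prop ▸ one_ne_zero), ?_,
    rank_rowSub_insert_compl_l0Support hrank hmin⟩
  refine rank_rowSub_lt_iff.mpr ⟨θ, hθ0, fun i hi => ?_⟩
  simpa [mem_l0Support] using hi

theorem exists_dotProduct_eq_one_of_obsFeas {J : Finset (Fin m)} (hJ : obsFeas H k J) :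
    ∃ θ, H k ⬝ᵥ θ = 1 ∧ ∀ i ∉ J, H i ⬝ᵥ θ = 0 := by
  obtain ⟨-, hlt, hins⟩ := hJ
  obtain ⟨v, hv0, hv⟩ := rank_rowSub_lt_iff.mp hlt
  have hkv : H k ⬝ᵥ v ≠ 0 := fun hkv => hins.not_lt <| rank_rowSub_lt_iff.mpr
    ⟨v, hv0, fun i hi => (Finset.mem_insert.mp hi).elim (· ▸ hkv) (hv i)⟩
  refine ⟨(H k ⬝ᵥ v)⁻¹ • v, ?_, fun i hi => ?_⟩
  · rw [dotProduct_smul, smul_eq_mul, inv_mul_cancel₀ hkv]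
  · rw [dotProduct_smul, hv i (Finset.mem_compl.mpr hi), smul_zero]

end SparseRecovery

/-- If `H(k,:) ≠ 0` and `rank H = n`, the minimum of `‖Hθ‖₀` subject to `H(k,:)θ = 1` is
attained, the minimum of `|J|` over feasible `J` for the observability problem is attained,
and the two minimum values coincide. -/
theorem stmt7 {m n : ℕ} (H : Matrix (Fin m) (Fin n) ℝ) (k : Fin m)
    (hrow : H k ≠ 0) (hrank : H.rank = n) :
    ∃ θ : Fin n → ℝ, H k ⬝ᵥ θ = 1 ∧
      (∀ θ' : Fin n → ℝ, H k ⬝ᵥ θ' = 1 → l0Full H θ ≤ l0Full H θ') ∧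
      ∃ J : Finset (Fin m), obsFeas H k J ∧
        (∀ J' : Finset (Fin m), obsFeas H k J' → J.card ≤ J'.card) ∧
        J.card = l0Full H θ := by
  obtain ⟨θ, hmin⟩ :=
    exists_minimalFor_of_wellFoundedLT _ (l0Full H) (exists_dotProduct_eq_one hrow)
  refine ⟨θ, hmin.prop, fun θ' h => hmin.le h, l0Support H θ, obsFeas_l0Support hrank hmin,
    fun J' hJ' => ?_, card_l0Support θ⟩
  obtain ⟨θ', hθ', hsupp⟩ := exists_dotProduct_eq_one_of_obsFeas hJ'
  exact (hmin.le hθ').trans (l0Full_le_card hsupp)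
end

section
/- Let B be a totally unimodular real matrix with r rows, let J be a set of r column indices of B such that the r×r submatrix B(:,J) is nonsingular, and let b be any column of B. Then the unique solution v of the linear system B(:,J)v = b has every entry in {−1, 0, 1}. -/
/-!
By Cramer's rule, `det B(:,J) * v i` is the determinant of `B(:,J)` with its `i`-th column
replaced by `b`, which is again a square submatrix of `B` (possibly with a repeated column).
Total unimodularity puts both determinants in `{-1, 0, 1}`, and the first one is a unit `±1`.
-/

open Matrix

namespace Matrix

section Cramer

variable {n α : Type*} [Fintype n] [DecidableEq n] [CommRing α]

theorem cramer_mulVec (A : Matrix n n α) (v : n → α) : A.cramer (A *ᵥ v) = A.det • v := by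
  rw [cramer_eq_adjugate_mulVec, mulVec_mulVec, adjugate_mul, smul_mulVec, one_mulVec]

theorem det_mul_apply_eq_det_updateCol {A : Matrix n n α} {v b : n → α} (h : A *ᵥ v = b)
    (i : n) : A.det * v i = (A.updateCol i b).det := by
  rw [← cramer_apply, ← h, cramer_mulVec, Pi.smul_apply, smul_eq_mul]

end Cramer

theorem updateCol_submatrix_eq_submatrix_update {l m n ι α : Type*} [DecidableEq n]
    (B : Matrix m ι α) (g : l → m) (f : n → ι) (i : n) (j : ι) :
    (B.submatrix g f).updateCol i (fun k => B (g k) j) = B.submatrix g (Function.update f i j) := by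
  ext k c
  by_cases hc : c = i
  · subst hc
    simp
  · simp [hc]

theorem IsTotallyUnimodular.apply_mem_range_of_submatrix_mulVec_eq_col
    {m ι R : Type*} [Fintype m] [DecidableEq m] [CommRing R] {B : Matrix m ι R}
    (hB : B.IsTotallyUnimodular) {f : m → ι} (hdet : (B.submatrix id f).det ≠ 0) {j : ι}
    {v : m → R} (hv : B.submatrix id f *ᵥ v = fun k => B k j) (i : m) :
    v i ∈ Set.range SignType.cast := by
  classical
  rw [isTotallyUnimodular_iff_fintype] at hB
  obtain ⟨s, hs⟩ := hB m id f
  obtain ⟨t, ht⟩ := hB m id (Function.update f i j)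
  have hst : (s : R) * v i = t := by
    rw [hs, ht, ← updateCol_submatrix_eq_submatrix_update]
    exact det_mul_apply_eq_det_updateCol hv i
  have hss : (s : R) * s = 1 := by
    rcases s with _ | _ | _
    · exact absurd hs.symm (by simpa using hdet)
    · simp
    · simp
  refine ⟨s * t, ?_⟩
  rw [SignType.coe_mul, ← hst, ← mul_assoc, hss, one_mul]

end Matrix

theorem stmt13_general {r : ℕ} {ι : Type*}
    (B : Matrix (Fin r) ι ℝ) (hB : B.IsTotallyUnimodular)
    (f : Fin r → ι)
    (hdet : (B.submatrix id f).det ≠ 0)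
    (j₀ : ι) (v : Fin r → ℝ)
    (hv : (B.submatrix id f).mulVec v = fun i => B i j₀) :
    ∀ i : Fin r, v i ∈ ({-1, 0, 1} : Set ℝ) := by
  intro i
  obtain ⟨s, hs⟩ := hB.apply_mem_range_of_submatrix_mulVec_eq_col hdet hv i
  rw [← hs]
  rcases s with _ | _ | _ <;> simp

/-- Cramer-type integrality: if `B` is totally unimodular with `r` rows, `J` is a set of `r`
columns of `B` (given by an injection `f`) whose square submatrix `B(:,J)` is nonsingular,
and `b` is any column of `B`, then the unique solution `v` of `B(:,J) v = b` has all entries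
in `{−1, 0, 1}`. -/
theorem stmt13 {r : ℕ} {ι : Type*} [Fintype ι] [DecidableEq ι]
    (B : Matrix (Fin r) ι ℝ) (hB : B.IsTotallyUnimodular)
    (f : Fin r → ι) (hf : Function.Injective f)
    (hdet : (B.submatrix id f).det ≠ 0)
    (j₀ : ι) (v : Fin r → ℝ)
    (hv : (B.submatrix id f).mulVec v = fun i => B i j₀) :
    ∀ i : Fin r, v i ∈ ({-1, 0, 1} : Set ℝ) :=
  stmt13_general B hB f hdet j₀ v hv
end
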